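/- Let 𝒢 be a strongly maximal stochastic subgroup of O(d²), i.e. a stochastic subgroup that is not contained in any strictly larger stochastic subgroup and such that the closed convex hull of its orbital germ G = {s ∈ ℝ^(d²) : s(j) = (d R_{ij} + 1)/(d(d+1)) for some R ∈ 𝒢 and some i} is a qplex. Then cc(G) is the unique qplex Q whose preservation group equals 𝒢. -/

import Mathlib

noncomputable section

/- Ambient space: ℝ^(d²) with the standard inner product. -/
abbrev V (d : ℕ) := EuclideanSpace ℝ (Fin (d^2))

/-- The standard inner product ⟨u, v⟩ = ∑ i, u i * v i. -/
def ip {d : ℕ} (u v : V d) : ℝ := inner ℝ u v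

/-- The barycenter c, with all entries equal to 1/d². -/
def cpt (d : ℕ) : V d := WithLp.toLp 2 (fun _ => 1/(d^2:ℝ))

/-- The hyperplane H = {u : ⟨u, c⟩ = 1/d²} of vectors whose entries sum to 1. -/
def Hs (d : ℕ) : Set (V d) := {u | ip u (cpt d) = 1/(d^2:ℝ)}

/-- The polar A* = {u ∈ H : ⟨u, v⟩ ≥ 1/(d(d+1)) for all v ∈ A}. -/
def polar (d : ℕ) (A : Set (V d)) : Set (V d) :=
  {u | u ∈ Hs d ∧ ∀ v ∈ A, 1/((d:ℝ)*((d:ℝ)+1)) ≤ ip u v}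

/-- cc(A): the closed convex hull of A. -/
def cc (d : ℕ) (A : Set (V d)) : Set (V d) := closure (convexHull ℝ A)

/-- The probability simplex Δ = {u ∈ H : u i ≥ 0 for all i}. -/
def probSimplex (d : ℕ) : Set (V d) := {u | u ∈ Hs d ∧ ∀ i, 0 ≤ u i}

/-- The basis distributions e_k, with e_k(i) = (δ_{ki} + 1/d)/(d+1). -/
def basisDist (d : ℕ) (k : Fin (d^2)) : V d :=
  WithLp.toLp 2 (fun i => ((if k = i then (1:ℝ) else 0) + 1/(d:ℝ)) / ((d:ℝ)+1))

/-- The basis simplex Δ_e: the convex hull of the basis distributions. -/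
def basisSimplex (d : ℕ) : Set (V d) := convexHull ℝ (Set.range (basisDist d))

/-- The out-ball B_o = {u ∈ H : ⟨u, u⟩ ≤ 2/(d(d+1))}. -/
def outBall (d : ℕ) : Set (V d) := {u | u ∈ Hs d ∧ ip u u ≤ 2/((d:ℝ)*((d:ℝ)+1))}

/-- The out-sphere S_o = {u ∈ H : ⟨u, u⟩ = 2/(d(d+1))}. -/
def outSphere (d : ℕ) : Set (V d) := {u | u ∈ Hs d ∧ ip u u = 2/((d:ℝ)*((d:ℝ)+1))}

/-- The in-ball B_i = {u ∈ H : ‖u − c‖² ≤ 1/(d²(d²−1))}. -/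
def inBall (d : ℕ) : Set (V d) :=
  {u | u ∈ Hs d ∧ ‖u - cpt d‖^2 ≤ 1/((d:ℝ)^2*((d:ℝ)^2-1))}

/-- The in-sphere S_i = {u ∈ H : ‖u − c‖² = 1/(d²(d²−1))}. -/
def inSphere (d : ℕ) : Set (V d) :=
  {u | u ∈ Hs d ∧ ‖u - cpt d‖^2 = 1/((d:ℝ)^2*((d:ℝ)^2-1))}

/-- The mid-ball B_m = {u ∈ H : ‖u − c‖² ≤ 1/(d²(d+1))}. -/
def midBall (d : ℕ) : Set (V d) :=
  {u | u ∈ Hs d ∧ ‖u - cpt d‖^2 ≤ 1/((d:ℝ)^2*((d:ℝ)+1))}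

/-- A germ: a subset of Δ whose pairwise inner products satisfy the
fundamental inequalities 1/(d(d+1)) ≤ ⟨p, s⟩ ≤ 2/(d(d+1)). -/
def IsGerm (d : ℕ) (G : Set (V d)) : Prop :=
  G ⊆ probSimplex d ∧
  ∀ p ∈ G, ∀ s ∈ G, 1/((d:ℝ)*((d:ℝ)+1)) ≤ ip p s ∧ ip p s ≤ 2/((d:ℝ)*((d:ℝ)+1))

/-- A qplex: a self-polar subset of Δ ∩ B_o. -/
def IsQplex (d : ℕ) (Q : Set (V d)) : Prop :=
  Q ⊆ probSimplex d ∩ outBall d ∧ Q = polar d Q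

/-- Action of a d²×d² matrix on a vector: (R u)(i) = ∑ j, R i j * u j. -/
def mvec (d : ℕ) (R : Matrix (Fin (d^2)) (Fin (d^2)) ℝ) (u : V d) : V d :=
  WithLp.toLp 2 (fun i => ∑ j, R i j * u j)

/-- A stochastic subgroup of O(d²): every element has all entries ≥ −1/d and
fixes the barycenter c. -/
def IsStochasticSubgroup (d : ℕ)
    (𝒢 : Subgroup (Matrix.orthogonalGroup (Fin (d^2)) ℝ)) : Prop :=
  ∀ R ∈ 𝒢,
    (∀ i j, -(1/(d:ℝ)) ≤ (R : Matrix (Fin (d^2)) (Fin (d^2)) ℝ) i j) ∧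
    mvec d (R : Matrix (Fin (d^2)) (Fin (d^2)) ℝ) (cpt d) = cpt d

/-- The orbital germ of 𝒢: the orbit of the basis distributions under 𝒢,
i.e. the vectors s^R_i with s^R_i(j) = (d R_{ij} + 1)/(d(d+1)). -/
def orbitalGerm (d : ℕ)
    (𝒢 : Subgroup (Matrix.orthogonalGroup (Fin (d^2)) ℝ)) : Set (V d) :=
  {s | ∃ R ∈ 𝒢, ∃ i, s = fun j =>
    ((d:ℝ) * (R : Matrix (Fin (d^2)) (Fin (d^2)) ℝ) i j + 1)/((d:ℝ)*((d:ℝ)+1))}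

/-- The preservation group of Q: the orthogonal matrices mapping Q onto Q. -/
def presGroup (d : ℕ) (Q : Set (V d)) :
    Set (Matrix.orthogonalGroup (Fin (d^2)) ℝ) :=
  {R | mvec d (R : Matrix (Fin (d^2)) (Fin (d^2)) ℝ) '' Q = Q}

/-!
The preservation group of a qplex `Q` is stochastic. Indeed `Q = Q*` contains the basis
distributions `e_k` (as `Q ⊆ Δ`) and hence their barycentre `c`. An orthogonal `R` preserving `Q`
sends `c` to a point of `H` with the same norm as `c`, and `c` is the unique point of minimal norm
in `H`, so `R c = c`. Finally, `R e_j ∈ Δ` says exactly that `R_ij ≥ -1/d`.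

Now `𝒢` preserves its orbital germ, hence `cc(G)`, so maximality forces the preservation group of
`cc(G)` to be `𝒢`. A qplex preserved by `𝒢` contains the `𝒢`-orbit of the `e_k`, hence the closed
convex set `cc(G)`; and nested qplexes are equal, since `P ⊆ Q` gives `Q = Q* ⊆ P* = P`.
-/

open scoped Pointwise RealInnerProductSpace

lemma eq_of_inner_eq_of_inner_self_le {E : Type*} [NormedAddCommGroup E] [InnerProductSpace ℝ E]
    {u c : E} (h₁ : ⟪u, c⟫ = ⟪c, c⟫) (h₂ : ⟪u, u⟫ ≤ ⟪c, c⟫) : u = c := by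
  have : ⟪u - c, u - c⟫ ≤ 0 := by
    rw [real_inner_sub_sub_self, h₁]; linarith
  exact sub_eq_zero.1 (inner_self_eq_zero.1 (this.antisymm real_inner_self_nonneg))

lemma ContinuousLinearMap.image_closedConvexHull_subset {E F : Type*}
    [AddCommGroup E] [Module ℝ E] [TopologicalSpace E]
    [AddCommGroup F] [Module ℝ F] [TopologicalSpace F] (f : E →L[ℝ] F) (s : Set E) :
    f '' closedConvexHull ℝ s ⊆ closedConvexHull ℝ (f '' s) :=
  Set.image_subset_iff.2 <| closedConvexHull_min (Set.image_subset_iff.1 subset_closedConvexHull)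
    (convex_closedConvexHull.linear_preimage f.toLinearMap)
    (isClosed_closedConvexHull.preimage f.continuous)

lemma Subgroup.le_stabilizer_of_forall_smul_set_subset {G α : Type*} [Group G] [MulAction G α]
    (H : Subgroup G) {s : Set α} (h : ∀ g ∈ H, g • s ⊆ s) : H ≤ MulAction.stabilizer G s :=
  fun g hg => (h g hg).antisymm (Set.subset_smul_set_iff.2 (h g⁻¹ (H.inv_mem hg)))

namespace Matrix.orthogonalGroup

variable {n : Type*} [Fintype n] [DecidableEq n]

lemma coe_inv_apply (R : orthogonalGroup n ℝ) (i j : n) :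
    ((R⁻¹ : orthogonalGroup n ℝ) : Matrix n n ℝ) i j = (R : Matrix n n ℝ) j i := by
  rw [UnitaryGroup.inv_val, star_apply, star_trivial]

lemma inner_smul_smul (R : orthogonalGroup n ℝ) (u v : EuclideanSpace ℝ n) :
    ⟪R • u, R • v⟫ = ⟪u, v⟫ :=
  ContinuousLinearMap.inner_map_map_of_mem_unitary
    (Unitary.map_mem (toEuclideanCLM (n := n) (𝕜 := ℝ)) R.2) u v

end Matrix.orthogonalGroup

variable {d : ℕ}

-- `R • u` is `R *ᵥ u`, via Mathlib's `Module (Matrix n n R) (n → R)` restricted to `O(d²)`.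
lemma presGroup_eq_stabilizer (Q : Set (V d)) :
    presGroup d Q = MulAction.stabilizer (Matrix.orthogonalGroup (Fin (d ^ 2)) ℝ) Q := rfl

lemma cpt_mem_Hs (hd : d ≠ 0) : cpt d ∈ Hs d := by
  simp [Hs, ip, cpt, PiLp.inner_apply, hd]

lemma eq_cpt_of_mem_Hs (hd : d ≠ 0) {u : V d} (hu : u ∈ Hs d)
    (h : ip u u ≤ ip (cpt d) (cpt d)) : u = cpt d :=
  eq_of_inner_eq_of_inner_self_le (hu.trans (cpt_mem_Hs hd).symm) h

lemma basisDist_eq (hd : d ≠ 0) (k : Fin (d ^ 2)) :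
    basisDist d k = ((d : ℝ) + 1)⁻¹ • (EuclideanSpace.single k 1 + (d : ℝ) • cpt d) := by
  ext i
  simp only [basisDist, cpt, smul_add, PiLp.add_apply, PiLp.smul_apply, PiLp.single_apply, eq_comm,
    smul_eq_mul, mul_ite, mul_one, mul_zero]
  split_ifs
  · field_simp
  · field_simp; ring

lemma ip_basisDist (hd : d ≠ 0) (k : Fin (d ^ 2)) {v : V d} (hv : v ∈ Hs d) :
    ip (basisDist d k) v = (v k + 1 / d) / (d + 1) := by
  have hcv : ⟪cpt d, v⟫ = 1 / (d : ℝ) ^ 2 := (real_inner_comm _ _).trans hv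
  rw [basisDist_eq hd]
  simp only [ip, real_inner_smul_left, inner_add_left, EuclideanSpace.inner_single_left, map_one,
    one_mul, hcv]
  field_simp

lemma basisDist_mem_Hs (hd : d ≠ 0) (k : Fin (d ^ 2)) : basisDist d k ∈ Hs d := by
  show ip _ _ = _
  rw [ip_basisDist hd k (cpt_mem_Hs hd)]
  simp only [cpt]
  field_simp
  ring

lemma cpt_eq_sum_basisDist (hd : d ≠ 0) : cpt d = ∑ k, (1 / (d : ℝ) ^ 2) • basisDist d k := by
  ext i
  simp only [basisDist, cpt, WithLp.ofLp_sum, WithLp.ofLp_smul, Finset.sum_apply, Pi.smul_apply,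
    smul_eq_mul, ← Finset.mul_sum, ← Finset.sum_div, Finset.sum_add_distrib, Finset.sum_ite_eq',
    Finset.mem_univ, if_true, Finset.sum_const, Finset.card_univ, Fintype.card_fin, nsmul_eq_mul,
    Nat.cast_pow]
  field_simp
  ring

lemma ofLp_smul_basisDist (hd : d ≠ 0) {R : Matrix.orthogonalGroup (Fin (d ^ 2)) ℝ}
    (hR : R • cpt d = cpt d) (k : Fin (d ^ 2)) :
    (R • basisDist d k).ofLp = fun j => ((d : ℝ) * (R : Matrix _ _ ℝ) j k + 1) / (d * (d + 1)) := by
  rw [basisDist_eq hd, smul_comm, smul_add, smul_comm, hR]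
  ext j
  simp only [Submonoid.smul_def, cpt, PiLp.add_apply, PiLp.smul_apply, WithLp.ofLp_smul,
    PiLp.ofLp_single, Matrix.smul_eq_mulVec, Matrix.mulVec_single, Pi.smul_apply, Matrix.col_apply,
    MulOpposite.op_one, one_smul, smul_eq_mul]
  field_simp

lemma polar_anti {A B : Set (V d)} (h : A ⊆ B) : polar d B ⊆ polar d A :=
  fun _ hu => ⟨hu.1, fun v hv => hu.2 v (h hv)⟩

lemma polar_eq_inter (A : Set (V d)) :
    polar d A = Hs d ∩ ⋂ v ∈ A, {u | 1 / ((d : ℝ) * (d + 1)) ≤ ip u v} := by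
  ext u; simp [polar]

lemma convex_polar (A : Set (V d)) : Convex ℝ (polar d A) := by
  rw [polar_eq_inter]
  exact (convex_hyperplane (innerSLFlip ℝ (cpt d)).isLinear _).inter
    (convex_iInter₂ fun v _ => convex_halfSpace_ge (innerSLFlip ℝ v).isLinear _)

lemma isClosed_polar (A : Set (V d)) : IsClosed (polar d A) := by
  rw [polar_eq_inter]
  exact (isClosed_eq (innerSLFlip ℝ (cpt d)).continuous continuous_const).inter
    (isClosed_biInter fun v _ => isClosed_le continuous_const (innerSLFlip ℝ v).continuous)

lemma basisDist_mem_polar_probSimplex (hd : d ≠ 0) (k : Fin (d ^ 2)) :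
    basisDist d k ∈ polar d (probSimplex d) := by
  refine ⟨basisDist_mem_Hs hd k, fun v hv => ?_⟩
  rw [ip_basisDist hd k hv.1, ← div_div]
  gcongr
  exact le_add_of_nonneg_left (hv.2 k)

namespace IsQplex

variable {P Q : Set (V d)}

lemma convex (hQ : IsQplex d Q) : Convex ℝ Q := hQ.2 ▸ convex_polar Q

lemma isClosed (hQ : IsQplex d Q) : IsClosed Q := hQ.2 ▸ isClosed_polar Q

lemma basisDist_mem (hd : d ≠ 0) (hQ : IsQplex d Q) (k : Fin (d ^ 2)) : basisDist d k ∈ Q :=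
  hQ.2 ▸ polar_anti (hQ.1.trans Set.inter_subset_left) (basisDist_mem_polar_probSimplex hd k)

lemma cpt_mem (hd : d ≠ 0) (hQ : IsQplex d Q) : cpt d ∈ Q := by
  rw [cpt_eq_sum_basisDist hd]
  refine hQ.convex.sum_mem (fun _ _ => by positivity) ?_ (fun k _ => hQ.basisDist_mem hd k)
  simp [hd]

lemma eq_of_subset (hP : IsQplex d P) (hQ : IsQplex d Q) (h : P ⊆ Q) : P = Q :=
  h.antisymm <| hQ.2.trans_subset <| (polar_anti h).trans_eq hP.2.symm

end IsQplex

lemma isStochasticSubgroup_stabilizer (hd : d ≠ 0) {Q : Set (V d)} (hQ : IsQplex d Q) :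
    IsStochasticSubgroup d (MulAction.stabilizer _ Q) := by
  intro R hR
  have hRQ : ∀ u ∈ Q, R • u ∈ Q := fun u hu => hR ▸ Set.smul_mem_smul_set hu
  have hRc : R • cpt d = cpt d :=
    eq_cpt_of_mem_Hs hd (hQ.1 (hRQ _ (hQ.cpt_mem hd))).1.1
      (Matrix.orthogonalGroup.inner_smul_smul R _ _).le
  refine ⟨fun i j => ?_, hRc⟩
  have hpos := (hQ.1 (hRQ _ (hQ.basisDist_mem hd j))).1.2 i
  rw [ofLp_smul_basisDist hd hRc] at hpos
  have h : 0 ≤ (d : ℝ) * (R : Matrix _ _ ℝ) i j + 1 := by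
    simpa using (le_div_iff₀ (by positivity)).1 hpos
  field_simp
  linarith

variable {𝒢 : Subgroup (Matrix.orthogonalGroup (Fin (d ^ 2)) ℝ)}

lemma orbitalGerm_eq (hd : d ≠ 0) (hst : IsStochasticSubgroup d 𝒢) :
    orbitalGerm d 𝒢 = {s | ∃ R ∈ 𝒢, ∃ i, s = R • basisDist d i} := by
  ext s
  constructor
  · rintro ⟨R, hR, i, hs⟩
    refine ⟨R⁻¹, inv_mem hR, i, WithLp.ofLp_injective 2 ?_⟩
    simp only [hs, ofLp_smul_basisDist hd (hst _ (inv_mem hR)).2,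
      Matrix.orthogonalGroup.coe_inv_apply]
  · rintro ⟨R, hR, i, rfl⟩
    refine ⟨R⁻¹, inv_mem hR, i, ?_⟩
    simp only [ofLp_smul_basisDist hd (hst _ hR).2, Matrix.orthogonalGroup.coe_inv_apply]

lemma smul_orbitalGerm_subset (hd : d ≠ 0) (hst : IsStochasticSubgroup d 𝒢)
    {R : Matrix.orthogonalGroup (Fin (d ^ 2)) ℝ} (hR : R ∈ 𝒢) :
    R • orbitalGerm d 𝒢 ⊆ orbitalGerm d 𝒢 := by
  rw [orbitalGerm_eq hd hst]
  rintro - ⟨-, ⟨S, hS, i, rfl⟩, rfl⟩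
  exact ⟨R * S, mul_mem hR hS, i, (mul_smul R S _).symm⟩

lemma le_stabilizer_cc_orbitalGerm (hd : d ≠ 0) (hst : IsStochasticSubgroup d 𝒢) :
    𝒢 ≤ MulAction.stabilizer _ (cc d (orbitalGerm d 𝒢)) := by
  refine 𝒢.le_stabilizer_of_forall_smul_set_subset fun R hR => ?_
  rw [cc, ← closedConvexHull_eq_closure_convexHull]
  calc R • closedConvexHull ℝ (orbitalGerm d 𝒢)
      ⊆ closedConvexHull ℝ (R • orbitalGerm d 𝒢) :=
        ContinuousLinearMap.image_closedConvexHull_subset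
          (Matrix.toEuclideanCLM (𝕜 := ℝ) (R : Matrix (Fin (d ^ 2)) (Fin (d ^ 2)) ℝ)) _
    _ ⊆ closedConvexHull ℝ (orbitalGerm d 𝒢) :=
        (closedConvexHull ℝ).monotone (smul_orbitalGerm_subset hd hst hR)

lemma cc_orbitalGerm_subset (hd : d ≠ 0) (hst : IsStochasticSubgroup d 𝒢) {Q : Set (V d)}
    (hQ : IsQplex d Q) (h𝒢 : 𝒢 ≤ MulAction.stabilizer _ Q) : cc d (orbitalGerm d 𝒢) ⊆ Q := by
  rw [cc, ← closedConvexHull_eq_closure_convexHull]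
  refine closedConvexHull_min ?_ hQ.convex hQ.isClosed
  rw [orbitalGerm_eq hd hst]
  rintro - ⟨R, hR, i, rfl⟩
  exact h𝒢 hR ▸ Set.smul_mem_smul_set (hQ.basisDist_mem hd i)

/-- if 𝒢 is a strongly maximal stochastic subgroup of O(d²),
then cc of its orbital germ is the unique qplex whose preservation group is 𝒢. -/
theorem statement18 (d : ℕ) (hd : 2 ≤ d)
    (𝒢 : Subgroup (Matrix.orthogonalGroup (Fin (d^2)) ℝ))
    (hst : IsStochasticSubgroup d 𝒢)
    (hmax : ∀ 𝒢' : Subgroup (Matrix.orthogonalGroup (Fin (d^2)) ℝ),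
      IsStochasticSubgroup d 𝒢' → 𝒢 ≤ 𝒢' → 𝒢' = 𝒢)
    (hq : IsQplex d (cc d (orbitalGerm d 𝒢))) :
    presGroup d (cc d (orbitalGerm d 𝒢))
      = (𝒢 : Set (Matrix.orthogonalGroup (Fin (d^2)) ℝ)) ∧
    ∀ Q : Set (V d), IsQplex d Q →
      presGroup d Q = (𝒢 : Set (Matrix.orthogonalGroup (Fin (d^2)) ℝ)) →
      Q = cc d (orbitalGerm d 𝒢) := by
  have hd0 : d ≠ 0 := by omega
  refine ⟨?_, fun Q hQ hpres => ?_⟩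
  · rw [presGroup_eq_stabilizer,
      hmax _ (isStochasticSubgroup_stabilizer hd0 hq) (le_stabilizer_cc_orbitalGerm hd0 hst)]
  · rw [presGroup_eq_stabilizer, SetLike.coe_set_eq] at hpres
    exact (hq.eq_of_subset hQ (cc_orbitalGerm_subset hd0 hst hQ hpres.ge)).symm
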